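/- If r is odd, then the topologically generated group G = ⟨⟨a₁,…,a_r⟩⟩ contains no odometer. -/

import Mathlib

namespace BinTree

/-- Vertices of the infinite rooted binary tree: finite words over `{0,1}`. -/
abbrev Vertex : Type := List Bool

/-- A function on vertices is a tree automorphism function if it preserves lengths
(levels) and prefixes. -/
def IsTreeAutFun (f : Vertex → Vertex) : Prop :=
  (∀ v, (f v).length = v.length) ∧ ∀ v w : Vertex, (f (v ++ w)).take v.length = f v

/-- `Ω`: the automorphism group of the infinite rooted binary tree, realized as the
subgroup of permutations of the set of vertices preserving the tree structure. -/
def TreeAut : Subgroup (Equiv.Perm Vertex) where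
  carrier := {e | IsTreeAutFun ⇑e}
  one_mem' := ⟨fun _ => rfl, fun v w => by
    simpa using List.take_left (l₁ := v) (l₂ := w)⟩
  mul_mem' := by
    rintro a b ha hb
    obtain ⟨ha1, ha2⟩ := ha
    obtain ⟨hb1, hb2⟩ := hb
    refine ⟨fun v => ?_, fun v w => ?_⟩
    · simp [Equiv.Perm.mul_apply, ha1, hb1]
    · have hb' : b (v ++ w) = b v ++ (b (v ++ w)).drop v.length := by
        conv_lhs => rw [← List.take_append_drop v.length (b (v ++ w)), hb2]
      have hlen : (b v).length = v.length := hb1 v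
      calc ((a * b) (v ++ w)).take v.length
          = (a (b v ++ (b (v ++ w)).drop v.length)).take v.length := by
            rw [Equiv.Perm.mul_apply, ← hb']
        _ = a (b v) := by rw [← hlen]; exact ha2 _ _
        _ = (a * b) v := rfl
  inv_mem' := by
    intro a ha
    obtain ⟨ha1, ha2⟩ := ha
    show IsTreeAutFun ⇑a⁻¹
    have hlen : ∀ v : Vertex, (a⁻¹ v).length = v.length := by
      intro v
      have h := ha1 (a⁻¹ v)
      rw [show a (a⁻¹ v) = v from Equiv.apply_symm_apply a v] at h
      exact h.symm ▸ rfl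
    refine ⟨hlen, fun v w => ?_⟩
    have htl : ((a⁻¹ (v ++ w)).take v.length).length = v.length := by
      rw [List.length_take, hlen, List.length_append]
      omega
    have key : a ((a⁻¹ (v ++ w)).take v.length) = v := by
      have h2 := ha2 ((a⁻¹ (v ++ w)).take v.length) ((a⁻¹ (v ++ w)).drop v.length)
      rw [List.take_append_drop, htl, show a (a⁻¹ (v ++ w)) = v ++ w from Equiv.apply_symm_apply a _] at h2
      rw [← h2]
      simpa using List.take_left (l₁ := v) (l₂ := w)
    have h3 := congrArg (⇑a⁻¹) key
    rwa [show a⁻¹ (a ((a⁻¹ (v ++ w)).take v.length)) = (a⁻¹ (v ++ w)).take v.length from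
      Equiv.symm_apply_apply a _] at h3

/-- wreath recursion, forward map: `(g,h)σᵗ` -/
def wrFun (g h : Vertex → Vertex) (t : Bool) : Vertex → Vertex
  | [] => []
  | x :: v => (xor x t) :: (cond x (h v) (g v))

/-- wreath recursion, inverse map -/
def wrFunInv (g h : Vertex → Vertex) (t : Bool) : Vertex → Vertex
  | [] => []
  | y :: w => (xor y t) :: (cond (xor y t) (h w) (g w))

/-- `(g,h)σᵗ` as a permutation of the vertices. -/
def wrPerm (g h : Equiv.Perm Vertex) (t : Bool) : Equiv.Perm Vertex where
  toFun := wrFun ⇑g ⇑h t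
  invFun := wrFunInv ⇑g.symm ⇑h.symm t
  left_inv := by
    intro v
    cases v with
    | nil => rfl
    | cons x v => cases x <;> cases t <;> simp [wrFun, wrFunInv]
  right_inv := by
    intro v
    cases v with
    | nil => rfl
    | cons x v => cases x <;> cases t <;> simp [wrFun, wrFunInv]

/-- The element `(g,h)σᵗ` of `Ω`: acts on the first level by `σᵗ` (where `σ` is the
swap of the two level-one subtrees), with section `g` at the vertex `0` and section
`h` at the vertex `1`.  Thus `(γ₀,γ₁)τ` of the wreath recursion
`Ω ≃ (Ω × Ω) ⋊ S₂` is `wr γ₀ γ₁ t` (`t = true` iff `τ = σ`). -/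
def wr (g h : TreeAut) (t : Bool) : TreeAut :=
  ⟨wrPerm g.1 h.1 t, by
    have hg : IsTreeAutFun ⇑g.1 := g.2
    have hh : IsTreeAutFun ⇑h.1 := h.2
    constructor
    · intro v
      cases v with
      | nil => rfl
      | cons x v =>
        cases x <;> simp [wrPerm, wrFun, hg.1, hh.1]
    · intro v w
      cases v with
      | nil => simp [wrPerm, wrFun]
      | cons x v =>
        cases x <;> simp [wrPerm, wrFun, hg.2, hh.2]⟩

/-- Application of a tree automorphism to a vertex. -/
def ap (γ : TreeAut) (v : Vertex) : Vertex := γ.1 v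

/-- The permutation induced by `γ ∈ Ω` on level `n` of the tree. -/
def levelPerm (n : ℕ) (γ : TreeAut) : Equiv.Perm (List.Vector Bool n) where
  toFun v := ⟨γ.1 v.1, by
    have h : IsTreeAutFun ⇑γ.1 := γ.2
    rw [h.1 v.1]; exact v.2⟩
  invFun v := ⟨γ.1.symm v.1, by
    have h : IsTreeAutFun ⇑γ.1 := γ.2
    have h2 := h.1 (γ.1.symm v.1)
    rw [Equiv.apply_symm_apply] at h2
    exact h2.symm.trans v.2⟩
  left_inv v := Subtype.ext (Equiv.symm_apply_apply _ _)
  right_inv v := Subtype.ext (Equiv.apply_symm_apply _ _)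

/-- Restriction to level `n` as a group homomorphism. -/
def levelHom (n : ℕ) : TreeAut →* Equiv.Perm (List.Vector Bool n) where
  toFun := levelPerm n
  map_one' := Equiv.ext fun v => Subtype.ext rfl
  map_mul' := fun g h => Equiv.ext fun v => Subtype.ext rfl

/-- `sgn_n`: the sign of the permutation induced on level `n`. -/
def sgn (n : ℕ) (γ : TreeAut) : ℤˣ := Equiv.Perm.sign (levelPerm n γ)

/-- An odometer: acts as a single `2^n`-cycle on each level `n ≥ 1`. -/
def IsOdometer (γ : TreeAut) : Prop :=
  ∀ n : ℕ, 1 ≤ n → (levelPerm n γ).IsCycle ∧ (levelPerm n γ).support = Finset.univ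

/-- The profinite topology on `Ω`: the coarsest topology making all level
restrictions (to the discrete finite groups) continuous. -/
instance : TopologicalSpace TreeAut :=
  ⨅ n : ℕ, TopologicalSpace.induced (levelPerm n) ⊥

/-- A vertex `w` is in a stable cycle of `γ` of length `k`: its `γ`-orbit has exactly
`k` elements, and for every level `m` above the level of `w`, all level-`m` vertices
lying above this orbit are in one single `γ`-cycle (necessarily of length
`2^(m - n) * k`, which we record via the periodicity condition). -/
def InStableCycle (γ : TreeAut) (w : Vertex) (k : ℕ) : Prop :=
  0 < k ∧ ap (γ ^ k) w = w ∧ (∀ j : ℕ, 0 < j → j < k → ap (γ ^ j) w ≠ w) ∧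
  (∀ u : Vertex, w.length < u.length → (∃ i : ℕ, u.take w.length = ap (γ ^ i) w) →
    (ap (γ ^ (2 ^ (u.length - w.length) * k)) u = u ∧
      ∀ u' : Vertex, u'.length = u.length →
        (∃ i : ℕ, u'.take w.length = ap (γ ^ i) w) → ∃ j : ℕ, ap (γ ^ j) u = u'))

/-- Self-similar subgroup: closed under taking sections (here the section of `γ` at
the first-level vertex `x` is characterized by `(xv)γ = (x)γ ⬝ (v)γₓ`). -/
def SelfSimilar (H : Subgroup TreeAut) : Prop :=
  ∀ γ ∈ H, ∀ x : Bool, ∀ δ : TreeAut,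
    (∀ v : Vertex, ap γ (x :: v) = ap γ [x] ++ ap δ v) → δ ∈ H

end BinTree

/-!
The map `F = sgn₁ ⋯ sgn_r : Ω → {±1}` is a homomorphism, and it is continuous because each
`sgn_n` only depends on the action on level `n`. The wreath recursion gives
`sgn_{n+1}(a_j) = sgn₁(a_{j-n})`, so `F(a_j) = ∏_k sgn₁(a_k) = (-1)² = 1`, since exactly `a₁` and
`a_s` move the first level. Hence `F = 1` on `G`. An odometer acts on level `n ≥ 1` as a cycle
of even length `2ⁿ`, so `F` takes the value `(-1)^r = -1` on it when `r` is odd.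
-/

open Equiv Finset

lemma neg_one_pow_two_pow_succ {M : Type*} [Monoid M] [HasDistribNeg M] (n : ℕ) :
    (-1 : M) ^ 2 ^ (n + 1) = 1 :=
  (Nat.even_pow.2 ⟨even_two, n.succ_ne_zero⟩).neg_one_pow

lemma ZMod.natCast_inj_of_lt {r k m : ℕ} (hk : k < r) (hm : m < r) :
    (k : ZMod r) = m ↔ k = m :=
  ⟨fun h => by simpa [ZMod.val_cast_of_lt hk, ZMod.val_cast_of_lt hm] using congrArg ZMod.val h,
    congrArg _⟩

lemma MonoidHom.closure_subset_ker {G M : Type*} [Group G] [TopologicalSpace G]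
    [MulOneClass M] [TopologicalSpace M] [T1Space M] {F : G →* M} (hF : Continuous F)
    {H : Subgroup G} (hH : H ≤ F.ker) : closure (H : Set G) ⊆ F.ker :=
  closure_minimal hH (isClosed_singleton.preimage hF)

namespace BinTree

def consEquiv (n : ℕ) : Bool × List.Vector Bool n ≃ List.Vector Bool (n + 1) where
  toFun p := p.1 ::ᵥ p.2
  invFun v := (v.head, v.tail)
  left_inv p := by simp
  right_inv v := v.cons_head_tail

lemma levelPerm_succ_wr (g h : TreeAut) (t : Bool) (n : ℕ) :
    levelPerm (n + 1) (wr g h t) = (consEquiv n).permCongr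
      (prodCongrLeft (fun _ => if t then swap false true else 1) *
        prodCongrRight fun x => bif x then levelPerm n h else levelPerm n g) := by
  ext ⟨_ | ⟨x, v⟩, hv⟩ : 2
  · simp at hv
  · cases x <;> cases t <;> rfl

lemma sgn_succ_wr (g h : TreeAut) (t : Bool) (n : ℕ) :
    sgn (n + 1) (wr g h t) = (if t then (-1) ^ 2 ^ n else 1) * (sgn n g * sgn n h) := by
  rw [sgn, levelPerm_succ_wr, Perm.sign_permCongr, map_mul, Perm.sign_prodCongrLeft,
    Perm.sign_prodCongrRight, Fintype.prod_bool]
  cases t <;> simp [card_vector, sgn, mul_comm]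

lemma sgn_zero (γ : TreeAut) : sgn 0 γ = 1 := by
  rw [sgn, Subsingleton.elim (levelPerm 0 γ) 1, map_one]

lemma sgn_apply_one (n : ℕ) : sgn n (1 : TreeAut) = 1 :=
  map_one (Perm.sign.comp (levelHom n))

lemma sgn_one_wr (g h : TreeAut) (t : Bool) : sgn 1 (wr g h t) = if t then -1 else 1 := by
  simp [sgn_succ_wr, sgn_zero]

lemma sgn_add_two_wr (g h : TreeAut) (t : Bool) (n : ℕ) :
    sgn (n + 2) (wr g h t) = sgn (n + 1) g * sgn (n + 1) h := by
  rw [sgn_succ_wr, neg_one_pow_two_pow_succ, ite_self, one_mul]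

lemma IsOdometer.sgn_eq {γ : TreeAut} (hγ : IsOdometer γ) {n : ℕ} (hn : 1 ≤ n) :
    sgn n γ = -1 := by
  obtain ⟨hcycle, hsupp⟩ := hγ n hn
  obtain ⟨m, rfl⟩ := Nat.exists_eq_add_of_le' hn
  rw [sgn, hcycle.sign, hsupp, card_univ, card_vector, Fintype.card_bool,
    neg_one_pow_two_pow_succ]

section Generators

variable {r s : ℕ} (hs1 : 1 < s) (hsr : s ≤ r) {a : ZMod r → TreeAut}
    (ha1 : a 1 = wr (a (r : ZMod r)) 1 true)
    (hmid : ∀ i : ℕ, 2 ≤ i → i ≤ s - 1 → a (i : ZMod r) = wr 1 (a ((i - 1 : ℕ) : ZMod r)) false)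
    (has : a (s : ZMod r) = wr 1 (a ((s - 1 : ℕ) : ZMod r)) true)
    (hhi : ∀ i : ℕ, s + 1 ≤ i → i ≤ r → a (i : ZMod r) = wr (a ((i - 1 : ℕ) : ZMod r)) 1 false)
include hs1 hsr ha1 hmid has hhi

lemma exists_generator_eq_wr (j : ZMod r) :
    ∃ t : Bool, (t ↔ j = 1 ∨ j = s) ∧ (a j = wr (a (j - 1)) 1 t ∨ a j = wr 1 (a (j - 1)) t) := by
  have : NeZero r := ⟨by omega⟩
  obtain ⟨k, hk, rfl⟩ : ∃ k < r, ((k + 1 : ℕ) : ZMod r) = j :=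
    ⟨(j - 1).val, ZMod.val_lt _, by simp⟩
  have hsucc : ∀ m < r, ((k + 1 : ℕ) : ZMod r) = ((m + 1 : ℕ) : ZMod r) ↔ k = m := fun m hm => by
    push_cast
    rw [add_left_inj, ZMod.natCast_inj_of_lt hk hm]
  have hone : ((k + 1 : ℕ) : ZMod r) = 1 ↔ k = 0 := by simpa using hsucc 0 (by omega)
  have hs : ((k + 1 : ℕ) : ZMod r) = s ↔ k = s - 1 := by
    simpa [Nat.sub_add_cancel hs1.le] using hsucc (s - 1) (by omega)
  have hpred : ((k + 1 : ℕ) : ZMod r) - 1 = ((k + 1 - 1 : ℕ) : ZMod r) := by simp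
  rw [hone, hs, hpred]
  rcases Nat.lt_or_ge k (s - 1) with hlt | hge
  · rcases Nat.eq_zero_or_pos k with rfl | hpos
    · exact ⟨true, by simp, Or.inl (by simpa using ha1)⟩
    · exact ⟨false, by simp; omega, Or.inr (hmid _ (by omega) (by omega))⟩
  · rcases hge.eq_or_lt with rfl | hgt
    · exact ⟨true, by simp, Or.inr (by rwa [Nat.sub_add_cancel hs1.le])⟩
    · exact ⟨false, by simp; omega, Or.inl (hhi _ (by omega) (by omega))⟩

lemma sgn_one_generator (j : ZMod r) : sgn 1 (a j) = if j = 1 ∨ j = s then -1 else 1 := by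
  obtain ⟨t, ht, hj | hj⟩ := exists_generator_eq_wr hs1 hsr ha1 hmid has hhi j <;>
    simp only [hj, sgn_one_wr, ← ht]

lemma sgn_add_two_generator (j : ZMod r) (n : ℕ) :
    sgn (n + 2) (a j) = sgn (n + 1) (a (j - 1)) := by
  obtain ⟨t, -, hj | hj⟩ := exists_generator_eq_wr hs1 hsr ha1 hmid has hhi j <;>
    simp [hj, sgn_add_two_wr, sgn_apply_one]

lemma sgn_succ_generator (j : ZMod r) (n : ℕ) : sgn (n + 1) (a j) = sgn 1 (a (j - n)) := by
  induction n generalizing j with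
  | zero => simp
  | succ n ih =>
    rw [sgn_add_two_generator hs1 hsr ha1 hmid has hhi, ih, sub_sub, Nat.cast_succ, add_comm]

lemma prod_sgn_generator [NeZero r] (j : ZMod r) : ∏ k : ZMod r, sgn (k.val + 1) (a j) = 1 := by
  have hne : (1 : ZMod r) ≠ s := by
    have h : ((s - 1 : ℕ) : ZMod r) ≠ 0 := by
      rw [Ne, ← Nat.cast_zero, ZMod.natCast_inj_of_lt (by omega) (by omega)]
      omega
    rw [Nat.cast_sub hs1.le, Nat.cast_one, sub_ne_zero] at h
    exact h.symm
  calc ∏ k : ZMod r, sgn (k.val + 1) (a j)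
      = ∏ k : ZMod r, sgn 1 (a (j - k)) := by
        refine prod_congr rfl fun k _ => ?_
        rw [sgn_succ_generator hs1 hsr ha1 hmid has hhi, ZMod.natCast_zmod_val]
    _ = ∏ k : ZMod r, sgn 1 (a k) := Fintype.prod_equiv (Equiv.subLeft j) _ _ fun _ => rfl
    _ = ∏ k, if k ∈ ({1, (s : ZMod r)} : Finset (ZMod r)) then -1 else 1 := by
        simp only [sgn_one_generator hs1 hsr ha1 hmid has hhi, mem_insert, mem_singleton]
    _ = ∏ k ∈ {1, (s : ZMod r)}, -1 := by rw [prod_ite_mem, univ_inter]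
    _ = 1 := by rw [prod_const, card_pair hne]; rfl

end Generators

lemma isLocallyConstant_levelPerm (n : ℕ) : IsLocallyConstant (levelPerm n) := by
  let _ : TopologicalSpace (Perm (List.Vector Bool n)) := ⊥
  have : DiscreteTopology (Perm (List.Vector Bool n)) := ⟨rfl⟩
  exact (IsLocallyConstant.iff_continuous _).2 (continuous_iInf_dom continuous_induced_dom)

lemma continuous_sgn (n : ℕ) : Continuous (sgn n) :=
  ((isLocallyConstant_levelPerm n).comp Perm.sign).continuous

theorem no_odometer_of_odd_general
    (r s : ℕ) (hs1 : 1 < s) (hsr : s ≤ r)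
    (a : ZMod r → TreeAut)
    (ha1 : a 1 = wr (a (r : ZMod r)) 1 true)
    (hmid : ∀ i : ℕ, 2 ≤ i → i ≤ s - 1 → a (i : ZMod r) = wr 1 (a ((i - 1 : ℕ) : ZMod r)) false)
    (has : a (s : ZMod r) = wr 1 (a ((s - 1 : ℕ) : ZMod r)) true)
    (hhi : ∀ i : ℕ, s + 1 ≤ i → i ≤ r → a (i : ZMod r) = wr (a ((i - 1 : ℕ) : ZMod r)) 1 false)
    (hodd : Odd r) :
    ∀ γ ∈ closure ((Subgroup.closure (Set.range a) : Subgroup TreeAut) : Set TreeAut),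
      ¬ IsOdometer γ := by
  intro γ hγ hodometer
  have : NeZero r := ⟨by omega⟩
  let F : TreeAut →* ℤˣ := ∏ k : ZMod r, Perm.sign.comp (levelHom (k.val + 1))
  have hF (δ : TreeAut) : F δ = ∏ k : ZMod r, sgn (k.val + 1) δ :=
    MonoidHom.finsetProd_apply _ _ _
  have hFcont : Continuous F :=
    (continuous_finsetProd univ fun k _ => continuous_sgn (k.val + 1)).congr fun δ => (hF δ).symm
  have hgen : Subgroup.closure (Set.range a) ≤ F.ker :=
    (Subgroup.closure_le _).2 <| Set.range_subset_iff.2 fun j => by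
      rw [SetLike.mem_coe, MonoidHom.mem_ker, hF, prod_sgn_generator hs1 hsr ha1 hmid has hhi]
  have hFγ : F γ = 1 := MonoidHom.closure_subset_ker hFcont hgen hγ
  rw [hF, prod_congr rfl fun k _ => hodometer.sgn_eq (by omega), prod_const, card_univ,
    ZMod.card, hodd.neg_one_pow] at hFγ
  exact absurd hFγ (by decide)

/-- if r is odd then G = ⟨⟨a₁,…,a_r⟩⟩ contains no odometer. -/
theorem no_odometer_of_odd
    (r s : ℕ) (hr : 3 ≤ r) (hs1 : 1 < s) (hsr : s ≤ r)
    (a : ZMod r → TreeAut)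
    (ha1 : a 1 = wr (a (r : ZMod r)) 1 true)
    (hmid : ∀ i : ℕ, 2 ≤ i → i ≤ s - 1 → a (i : ZMod r) = wr 1 (a ((i - 1 : ℕ) : ZMod r)) false)
    (has : a (s : ZMod r) = wr 1 (a ((s - 1 : ℕ) : ZMod r)) true)
    (hhi : ∀ i : ℕ, s + 1 ≤ i → i ≤ r → a (i : ZMod r) = wr (a ((i - 1 : ℕ) : ZMod r)) 1 false)
    (hodd : Odd r) :
    ∀ γ ∈ closure ((Subgroup.closure (Set.range a) : Subgroup TreeAut) : Set TreeAut),
      ¬ IsOdometer γ :=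
  no_odometer_of_odd_general r s hs1 hsr a ha1 hmid has hhi hodd

end BinTree
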